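/- arXiv:2409.09111 — 6 statements merged into one kernel-verified Lean document; each statement's English description precedes it below -/
import Mathlib

section
/- Let N,d ≥ 1, let S = (s_ij) ∈ ℝ^{N×N} be symmetric with nonnegative entries, let D̃ = diag(d̃_1,…,d̃_N) with d̃_i = Σ_j s_ij, and let Δ = D̃ − S. Let λ₁ be the largest eigenvalue of Δ and let τ > 0 satisfy τ·λ₁ ≤ 1. Define the diffusion iteration Z^(k+1) = (I − τΔ)Z^(k), i.e. row-wise z_i^(k+1) = (1 − τ Σ_j s_ij) z_i^(k) + τ Σ_j s_ij z_j^(k), starting from any Z^(0) ∈ ℝ^{N×d}. Define the energy E(Z,k) = ‖Z − Z^(k)‖_F² + (τ/2) Σ_{i,j} s_ij ‖z_i − z_j‖₂². Then for every k ≥ 1, E(Z^(k+1), k) ≤ E(Z^(k), k−1). -/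
/-! With `Q = 1 - τΔ`, `Y = Z⁽ᵏ⁾ - Z⁽ᵏ⁻¹⁾` and `Z = Z⁽ᵏ⁾`, the energy `E(Z⁽ᵏ⁾, k - 1)` equals
`tr(YᵀY) + τ tr(ZᵀΔZ)`, and one step of the iteration replaces `Y, Z` by `QY, QZ`. The energy
therefore decreases as soon as `1 - Q²` and `Δ - QΔQ` are positive semidefinite. Both are
polynomials in `Δ`, whose eigenvalues `μ` lie in `[0, λ₁]` (`Δ` is a weighted graph Laplacian), and
`0 ≤ 1 - τμ ≤ 1` there, so `1 - (1 - τμ)² ≥ 0` and `μ (1 - (1 - τμ)²) ≥ 0`. -/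

open Finset Matrix

namespace Matrix

section Laplacian

variable {ι κ R : Type*} [Fintype ι] [CommRing R]

lemma trace_transpose_mul_self [Fintype κ] (M : Matrix ι κ R) :
    trace (Mᵀ * M) = ∑ i, ∑ c, M i c ^ 2 := by
  simp [trace, mul_apply, sq, sum_comm (γ := ι)]

variable [DecidableEq ι]

def laplacian (s : Matrix ι ι R) : Matrix ι ι R :=
  diagonal (fun i => ∑ j, s i j) - s

lemma laplacian_mul_apply (s : Matrix ι ι R) (M : Matrix ι κ R) (i : ι) (c : κ) :
    (laplacian s * M) i c = ∑ j, s i j * (M i c - M j c) := by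
  rw [laplacian, Matrix.sub_mul, sub_apply, diagonal_mul, mul_apply, sum_mul, ← sum_sub_distrib]
  simp only [mul_sub]

lemma diffusion_step_eq {s : Matrix ι ι R} {τ : R} {Z Z' : Matrix ι κ R}
    (h : ∀ i c, Z' i c = (1 - τ * ∑ j, s i j) * Z i c + τ * ∑ j, s i j * Z j c) :
    Z' = (1 - τ • laplacian s) * Z := by
  ext i c
  rw [h, Matrix.sub_mul, Matrix.one_mul, Matrix.smul_mul, sub_apply, smul_apply,
    laplacian_mul_apply, smul_eq_mul]
  simp only [mul_sub, sum_sub_distrib, ← sum_mul]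
  ring

lemma sum_mul_sum_sq_sub_eq_two_mul_trace_laplacian [Fintype κ] {s : Matrix ι ι R}
    (hs : s.IsSymm) (M : Matrix ι κ R) :
    ∑ i, ∑ j, s i j * ∑ c, (M i c - M j c) ^ 2 = 2 * trace (Mᵀ * laplacian s * M) := by
  have hquad : trace (Mᵀ * laplacian s * M)
      = ∑ i, ∑ j, s i j * ∑ c, M i c * (M i c - M j c) := by
    simp only [trace, diag, Matrix.mul_assoc, mul_apply (M := Mᵀ), transpose_apply,
      laplacian_mul_apply, mul_sum]
    rw [sum_comm]
    refine sum_congr rfl fun i _ => ?_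
    rw [sum_comm]
    exact sum_congr rfl fun j _ => sum_congr rfl fun c _ => by ring
  have hswap : ∑ i, ∑ j, s i j * ∑ c, M j c * (M j c - M i c)
      = ∑ i, ∑ j, s i j * ∑ c, M i c * (M i c - M j c) := by
    rw [sum_comm]
    simp only [hs.apply]
  rw [hquad, two_mul]
  nth_rw 2 [← hswap]
  simp only [← sum_add_distrib, ← mul_add]
  refine sum_congr rfl fun i _ => sum_congr rfl fun j _ => ?_
  congr 1
  exact sum_congr rfl fun c _ => by ring

end Laplacian

section Real

open Polynomial

variable {ι κ : Type*} [Fintype ι] [Fintype κ]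

theorem PosSemidef.trace_transpose_mul_mul_nonneg {A : Matrix ι ι ℝ} (hA : A.PosSemidef)
    (M : Matrix ι κ ℝ) : 0 ≤ trace (Mᵀ * A * M) := by
  simpa [conjTranspose_eq_transpose_of_trivial] using (hA.conjTranspose_mul_mul_same M).trace_nonneg

variable [DecidableEq ι]

theorem posSemidef_laplacian {s : Matrix ι ι ℝ} (hs : s.IsSymm) (hs_nonneg : ∀ i j, 0 ≤ s i j) :
    (laplacian s).PosSemidef := by
  have hsymm : (laplacian s).IsHermitian := by
    simp [laplacian, IsHermitian, conjTranspose_eq_transpose_of_trivial, hs.eq]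
  refine .of_dotProduct_mulVec_nonneg hsymm fun x => ?_
  have hx := sum_mul_sum_sq_sub_eq_two_mul_trace_laplacian hs (replicateCol Unit x)
  rw [transpose_replicateCol, Matrix.mul_assoc, ← replicateCol_mulVec,
    replicateRow_mul_replicateCol] at hx
  simp only [replicateCol_apply, trace, univ_unique, diag_apply, of_apply, sum_const,
    card_singleton, one_smul] at hx
  have hnonneg : 0 ≤ ∑ i, ∑ j, s i j * (x i - x j) ^ 2 :=
    sum_nonneg fun i _ => sum_nonneg fun j _ => mul_nonneg (hs_nonneg i j) (sq_nonneg _)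
  rw [star_trivial]
  linarith

open scoped MatrixOrder in
theorem IsHermitian.posSemidef_aeval {A : Matrix ι ι ℝ} (hA : A.IsHermitian) (p : ℝ[X])
    (hp : ∀ i, 0 ≤ p.eval (hA.eigenvalues i)) : (aeval A p).PosSemidef := by
  rw [← nonneg_iff_posSemidef, ← cfc_polynomial p A hA]
  refine cfc_nonneg fun x hx => ?_
  obtain ⟨i, rfl⟩ := hA.spectrum_real_eq_range_eigenvalues ▸ hx
  exact hp i

theorem trace_energy_one_sub_smul_mul_le {L : Matrix ι ι ℝ} (hL : L.IsHermitian) {τ : ℝ}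
    (hτ : 0 ≤ τ) (hL0 : ∀ i, 0 ≤ hL.eigenvalues i) (hτL : ∀ i, τ * hL.eigenvalues i ≤ 1)
    (Y Z : Matrix ι κ ℝ) :
    trace (((1 - τ • L) * Y)ᵀ * ((1 - τ • L) * Y))
        + τ * trace (((1 - τ • L) * Z)ᵀ * L * ((1 - τ • L) * Z))
      ≤ trace (Yᵀ * Y) + τ * trace (Zᵀ * L * Z) := by
  set Q := 1 - τ • L with hQ
  have hQT : Qᵀ = Q := by
    simp [hQ, ← conjTranspose_eq_transpose_of_trivial, hL.eq]
  have hY : (1 - Q * Q).PosSemidef := by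
    convert hL.posSemidef_aeval (1 - (1 - C τ * X) ^ 2) fun i => ?_ using 1
    · simp [hQ, Algebra.algebraMap_eq_smul_one, sq]
    · have hμ := hL0 i
      simp only [eval_sub, eval_one, eval_pow, eval_mul, eval_C, eval_X]
      nlinarith [mul_nonneg (mul_nonneg hτ hμ) (sub_nonneg.2 (hτL i))]
  have hZ : (L - Q * L * Q).PosSemidef := by
    convert hL.posSemidef_aeval (X - (1 - C τ * X) * X * (1 - C τ * X)) fun i => ?_ using 1
    · simp [hQ, Algebra.algebraMap_eq_smul_one]
    · have hμ := hL0 i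
      simp only [eval_sub, eval_mul, eval_one, eval_C, eval_X]
      nlinarith [mul_nonneg hμ (mul_nonneg (mul_nonneg hτ hμ) (sub_nonneg.2 (hτL i)))]
  have hY' := hY.trace_transpose_mul_mul_nonneg Y
  have hZ' := hZ.trace_transpose_mul_mul_nonneg Z
  simp only [transpose_mul, hQT, Matrix.mul_sub, Matrix.sub_mul, Matrix.mul_one, trace_sub,
    Matrix.mul_assoc] at hY' hZ' ⊢
  nlinarith

/-- `diffusionEnergy s τ Z (Z⁽ᵏ⁾)` is the energy `E(Z, k)`. -/
noncomputable def diffusionEnergy (s : Matrix ι ι ℝ) (τ : ℝ) (Z Z' : Matrix ι κ ℝ) : ℝ :=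
  ∑ i, ∑ c, (Z i c - Z' i c) ^ 2 + τ / 2 * ∑ i, ∑ j, s i j * ∑ c, (Z i c - Z j c) ^ 2

theorem diffusionEnergy_eq_trace {s : Matrix ι ι ℝ} (hs : s.IsSymm) (τ : ℝ)
    (Z Z' : Matrix ι κ ℝ) :
    diffusionEnergy s τ Z Z'
      = trace ((Z - Z')ᵀ * (Z - Z')) + τ * trace (Zᵀ * laplacian s * Z) := by
  rw [diffusionEnergy, sum_mul_sum_sq_sub_eq_two_mul_trace_laplacian hs, trace_transpose_mul_self]
  simp only [sub_apply]
  ring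

theorem diffusionEnergy_mul_le {s : Matrix ι ι ℝ} (hs : s.IsSymm) (hs_nonneg : ∀ i j, 0 ≤ s i j)
    (hL : (laplacian s).IsHermitian) {τ : ℝ} (hτ : 0 ≤ τ) (hτL : ∀ i, τ * hL.eigenvalues i ≤ 1)
    (Z Z' : Matrix ι κ ℝ) :
    diffusionEnergy s τ ((1 - τ • laplacian s) * Z) ((1 - τ • laplacian s) * Z')
      ≤ diffusionEnergy s τ Z Z' := by
  rw [diffusionEnergy_eq_trace hs, diffusionEnergy_eq_trace hs, ← Matrix.mul_sub]
  exact trace_energy_one_sub_smul_mul_le hL hτ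
    (posSemidef_laplacian hs hs_nonneg).eigenvalues_nonneg hτL _ _

end Real

end Matrix

theorem stmt_0_general (N d : ℕ)
    (s : Matrix (Fin N) (Fin N) ℝ)
    (hs_symm : s.IsSymm) (hs_nonneg : ∀ i j, 0 ≤ s i j)
    (Δ : Matrix (Fin N) (Fin N) ℝ)
    (hΔ : Δ = Matrix.diagonal (fun i => ∑ j, s i j) - s)
    (hΔH : Δ.IsHermitian)
    (lam1 : ℝ) (hlam1 : IsGreatest (Set.range hΔH.eigenvalues) lam1)
    (τ : ℝ) (hτ : 0 < τ) (hτ1 : τ * lam1 ≤ 1)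
    (Z : ℕ → Matrix (Fin N) (Fin d) ℝ)
    (hZ : ∀ k (i : Fin N) (c : Fin d), Z (k + 1) i c =
      (1 - τ * ∑ j, s i j) * Z k i c + τ * ∑ j, s i j * Z k j c) :
    ∀ k, 1 ≤ k →
      ((∑ i, ∑ c, (Z (k + 1) i c - Z k i c) ^ 2)
          + (τ / 2) * ∑ i, ∑ j, s i j * ∑ c, (Z (k + 1) i c - Z (k + 1) j c) ^ 2)
        ≤ ((∑ i, ∑ c, (Z k i c - Z (k - 1) i c) ^ 2)
          + (τ / 2) * ∑ i, ∑ j, s i j * ∑ c, (Z k i c - Z k j c) ^ 2) := by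
  subst hΔ
  have hstep (k : ℕ) : Z (k + 1) = (1 - τ • laplacian s) * Z k := diffusion_step_eq (hZ k)
  have hτL (i : Fin N) : τ * hΔH.eigenvalues i ≤ 1 :=
    (mul_le_mul_of_nonneg_left (hlam1.2 ⟨i, rfl⟩) hτ.le).trans hτ1
  rintro (_ | k) hk
  · omega
  · have hdescent := diffusionEnergy_mul_le hs_symm hs_nonneg hΔH hτ.le hτL (Z (k + 1)) (Z k)
    rw [← hstep, ← hstep] at hdescent
    exact hdescent

/-- energy descent of the diffusion iteration with static
symmetric nonnegative coupling matrix `s`, Laplacian `Δ`, largest eigenvalue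
`lam1`, and step size `τ` with `τ * lam1 ≤ 1`. -/
theorem stmt_0 (N d : ℕ) (hN : 1 ≤ N) (hd : 1 ≤ d)
    (s : Matrix (Fin N) (Fin N) ℝ)
    (hs_symm : s.IsSymm) (hs_nonneg : ∀ i j, 0 ≤ s i j)
    (Δ : Matrix (Fin N) (Fin N) ℝ)
    (hΔ : Δ = Matrix.diagonal (fun i => ∑ j, s i j) - s)
    (hΔH : Δ.IsHermitian)
    (lam1 : ℝ) (hlam1 : IsGreatest (Set.range hΔH.eigenvalues) lam1)
    (τ : ℝ) (hτ : 0 < τ) (hτ1 : τ * lam1 ≤ 1)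
    (Z : ℕ → Matrix (Fin N) (Fin d) ℝ)
    (hZ : ∀ k (i : Fin N) (c : Fin d), Z (k + 1) i c =
      (1 - τ * ∑ j, s i j) * Z k i c + τ * ∑ j, s i j * Z k j c) :
    ∀ k, 1 ≤ k →
      ((∑ i, ∑ c, (Z (k + 1) i c - Z k i c) ^ 2)
          + (τ / 2) * ∑ i, ∑ j, s i j * ∑ c, (Z (k + 1) i c - Z (k + 1) j c) ^ 2)
        ≤ ((∑ i, ∑ c, (Z k i c - Z (k - 1) i c) ^ 2)
          + (τ / 2) * ∑ i, ∑ j, s i j * ∑ c, (Z k i c - Z k j c) ^ 2) :=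
  stmt_0_general N d s hs_symm hs_nonneg Δ hΔ hΔH lam1 hlam1 τ hτ hτ1 Z hZ
end

section
/- Let N,d ≥ 1 and let δ: ℝ → ℝ be differentiable, non-decreasing and concave on [0,∞) with δ′ > 0 on [0,∞). Then there exist a step size τ with 0 < τ ≤ 1 and a weight λ > 0 such that the following holds: starting from any Z^(0) ∈ ℝ^{N×d}, define for each k the weights ω_ij^(k) = δ′(‖z_i^(k) − z_j^(k)‖₂²), the row-normalized coupling matrix ŝ_ij^(k) = ω_ij^(k) / Σ_{l=1}^N ω_il^(k), the iteration z_i^(k+1) = (1 − τ Σ_j ŝ_ij^(k)) z_i^(k) + τ Σ_j ŝ_ij^(k) z_j^(k), and the regularized energy E(Z,k;δ) = ‖Z − Z^(k)‖_F² + λ Σ_{i,j} δ(‖z_i − z_j‖₂²). Then for every k ≥ 1, E(Z^(k+1), k; δ) ≤ E(Z^(k), k−1; δ). -/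
/-!
Freeze the weights `w i j = δ' (‖z i - z j‖ ^ 2)` at `Z^(k)`. Concavity of `δ` gives the tangent
bound `Σ δ(‖z'_i - z'_j‖²) ≤ Σ δ(‖z_i - z_j‖²) + Σ w_ij (‖z'_i - z'_j‖² - ‖z_i - z_j‖²)`, so it
suffices that the `w`-weighted quadratic energy drops. For the step with `τ = 1/2`, expanding the
square and using the symmetry of `w` shows that it drops by at least `4 Σ_i D_i ‖z'_i - z_i‖²`,
where `D_i = Σ_l w_il ≥ w_ii = δ'(0)`. With `λ = 1/(4 δ'(0))` this beats the movement term
`‖Z^(k+1) - Z^(k)‖²`, and the previous movement term `‖Z^(k) - Z^(k-1)‖²` is nonnegative.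
-/

open Finset
open scoped RealInnerProductSpace

lemma ConcaveOn.le_add_mul_sub_of_hasDerivAt {S : Set ℝ} {f : ℝ → ℝ} {f' x y : ℝ}
    (hf : ConcaveOn ℝ S f) (hx : x ∈ S) (hy : y ∈ S) (hf' : HasDerivAt f f' x) :
    f y ≤ f x + f' * (y - x) := by
  rcases lt_trichotomy x y with hxy | rfl | hxy
  · have hslope := hf.slope_le_of_hasDerivAt hx hy hxy hf'
    rw [slope_def_field, div_le_iff₀ (sub_pos.2 hxy)] at hslope
    linarith
  · simp
  · have hslope := hf.le_slope_of_hasDerivAt hy hx hxy hf'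
    rw [slope_def_field, le_div_iff₀ (sub_pos.2 hxy)] at hslope
    linarith

section Diffusion

variable {ι E : Type*} [Fintype ι] [NormedAddCommGroup E] [InnerProductSpace ℝ E]

noncomputable def rowNormalize (w : ι → ι → ℝ) (i j : ι) : ℝ := w i j / ∑ l, w i l

noncomputable def diffusionStep (w : ι → ι → ℝ) (τ : ℝ) (z : ι → E) (i : ι) : E :=
  z i + τ • ∑ j, rowNormalize w i j • (z j - z i)

noncomputable def diffusivity (δ' : ℝ → ℝ) (z : ι → E) (i j : ι) : ℝ := δ' (‖z i - z j‖ ^ 2)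

variable {w : ι → ι → ℝ}

lemma sum_sum_mul_comm_of_symm (hw : ∀ i j, w i j = w j i) (f : ι → ι → ℝ) :
    ∑ i, ∑ j, w i j * f j i = ∑ i, ∑ j, w i j * f i j := by
  rw [Finset.sum_comm]
  exact sum_congr rfl fun i _ => sum_congr rfl fun j _ => by rw [hw]

lemma sum_sum_mul_norm_sub_sq_le (hw0 : ∀ i j, 0 ≤ w i j) (hw : ∀ i j, w i j = w j i)
    (x : ι → E) :
    ∑ i, ∑ j, w i j * ‖x i - x j‖ ^ 2 ≤ 4 * ∑ i, (∑ j, w i j) * ‖x i‖ ^ 2 :=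
  calc ∑ i, ∑ j, w i j * ‖x i - x j‖ ^ 2
      ≤ ∑ i, ∑ j, w i j * (2 * ‖x i‖ ^ 2 + 2 * ‖x j‖ ^ 2) := by
        gcongr with i _ j _
        · exact hw0 i j
        · linarith [parallelogram_law_with_norm ℝ (x i) (x j), sq_nonneg ‖x i + x j‖]
    _ = 2 * ∑ i, ∑ j, w i j * ‖x i‖ ^ 2 + 2 * ∑ i, ∑ j, w i j * ‖x j‖ ^ 2 := by
        simp only [mul_add, sum_add_distrib, mul_sum, mul_left_comm (2 : ℝ)]
    _ = 4 * ∑ i, (∑ j, w i j) * ‖x i‖ ^ 2 := by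
        rw [sum_sum_mul_comm_of_symm hw fun i _ => ‖x i‖ ^ 2]
        simp only [sum_mul]
        ring

lemma sum_sum_mul_inner_sub_sub (hw : ∀ i j, w i j = w j i) (z x : ι → E) :
    ∑ i, ∑ j, w i j * ⟪z i - z j, x i - x j⟫ = -2 * ∑ i, ⟪∑ j, w i j • (z j - z i), x i⟫ := by
  have hdiag := sum_sum_mul_comm_of_symm hw fun i _ => ⟪z i, x i⟫
  have hcross := sum_sum_mul_comm_of_symm hw fun i j => ⟪z i, x j⟫
  simp only [inner_sub_left, inner_sub_right, sum_inner, real_inner_smul_left, mul_sub,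
    sum_sub_distrib] at hdiag hcross ⊢
  linarith

lemma inner_div_smul_self_eq (τ D : ℝ) (G : E) : ⟪G, (τ / D) • G⟫ = D / τ * ‖(τ / D) • G‖ ^ 2 := by
  rw [real_inner_smul_right, real_inner_self_eq_norm_sq, norm_smul, mul_pow, Real.norm_eq_abs,
    sq_abs, ← mul_assoc]
  congr 1
  rcases eq_or_ne τ 0 with rfl | hτ
  · simp
  rcases eq_or_ne D 0 with rfl | hD
  · simp
  field_simp

lemma diffusionStep_sub_self (τ : ℝ) (z : ι → E) (i : ι) :
    diffusionStep w τ z i - z i = (τ / ∑ l, w i l) • ∑ j, w i j • (z j - z i) := by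
  simp only [diffusionStep, rowNormalize, add_sub_cancel_left, smul_sum, smul_smul]
  congr 1 with j
  ring_nf

lemma sum_sum_mul_norm_diffusionStep_sub_sq_le (hw0 : ∀ i j, 0 ≤ w i j)
    (hw : ∀ i j, w i j = w j i) (τ : ℝ) (z : ι → E) :
    ∑ i, ∑ j, w i j *
        (‖diffusionStep w τ z i - diffusionStep w τ z j‖ ^ 2 - ‖z i - z j‖ ^ 2)
      ≤ -4 * (τ⁻¹ - 1) * ∑ i, (∑ j, w i j) * ‖diffusionStep w τ z i - z i‖ ^ 2 := by
  set Δ := fun i => diffusionStep w τ z i - z i with hΔ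
  have hexpand : ∀ i j, ‖diffusionStep w τ z i - diffusionStep w τ z j‖ ^ 2 - ‖z i - z j‖ ^ 2
      = 2 * ⟪z i - z j, Δ i - Δ j⟫ + ‖Δ i - Δ j‖ ^ 2 := by
    intro i j
    rw [show diffusionStep w τ z i - diffusionStep w τ z j = (z i - z j) + (Δ i - Δ j) by
      simp only [hΔ]; abel, norm_add_sq_real]
    ring
  have hlinear : ∀ i, ⟪∑ j, w i j • (z j - z i), Δ i⟫ = (∑ j, w i j) / τ * ‖Δ i‖ ^ 2 := by
    intro i
    simp only [hΔ, diffusionStep_sub_self, inner_div_smul_self_eq]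
  simp only [hexpand, mul_add, sum_add_distrib, mul_left_comm _ (2 : ℝ), ← mul_sum,
    sum_sum_mul_inner_sub_sub hw, hlinear]
  have hquad := sum_sum_mul_norm_sub_sq_le hw0 hw Δ
  have hscale : ∑ i, (∑ j, w i j) / τ * ‖Δ i‖ ^ 2 = τ⁻¹ * ∑ i, (∑ j, w i j) * ‖Δ i‖ ^ 2 := by
    rw [mul_sum]; congr 1 with i; ring
  rw [hscale]
  linarith

theorem sum_norm_diffusionStep_sub_sq_add_le {δ δ' : ℝ → ℝ}
    (hderiv : ∀ u : ℝ, 0 ≤ u → HasDerivAt δ (δ' u) u) (hconc : ConcaveOn ℝ (Set.Ici 0) δ)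
    (hpos : ∀ u : ℝ, 0 ≤ u → 0 < δ' u) (z : ι → E) :
    ∑ i, ‖diffusionStep (diffusivity δ' z) (1 / 2) z i - z i‖ ^ 2
        + (4 * δ' 0)⁻¹ * ∑ i, ∑ j,
          δ (‖diffusionStep (diffusivity δ' z) (1 / 2) z i
            - diffusionStep (diffusivity δ' z) (1 / 2) z j‖ ^ 2)
      ≤ (4 * δ' 0)⁻¹ * ∑ i, ∑ j, δ (‖z i - z j‖ ^ 2) := by
  set w := diffusivity δ' z
  set z' := diffusionStep w (1 / 2) z
  have hw0 : ∀ i j, 0 ≤ w i j := fun i j => (hpos _ (sq_nonneg _)).le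
  have hw : ∀ i j, w i j = w j i := fun i j => by simp only [w, diffusivity, norm_sub_rev]
  have hrow : ∀ i, δ' 0 ≤ ∑ l, w i l := fun i =>
    calc δ' 0 = w i i := by simp [w, diffusivity]
      _ ≤ ∑ l, w i l := single_le_sum (fun l _ => hw0 i l) (mem_univ i)
  have htangent : ∑ i, ∑ j, δ (‖z' i - z' j‖ ^ 2)
      ≤ ∑ i, ∑ j, δ (‖z i - z j‖ ^ 2)
        + ∑ i, ∑ j, w i j * (‖z' i - z' j‖ ^ 2 - ‖z i - z j‖ ^ 2) := by
    simp only [← sum_add_distrib]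
    gcongr with i _ j _
    exact hconc.le_add_mul_sub_of_hasDerivAt (Set.mem_Ici.2 (sq_nonneg _))
      (Set.mem_Ici.2 (sq_nonneg _)) (hderiv _ (sq_nonneg _))
  have hdescent := sum_sum_mul_norm_diffusionStep_sub_sq_le hw0 hw (1 / 2) z
  have hmass : δ' 0 * ∑ i, ‖z' i - z i‖ ^ 2 ≤ ∑ i, (∑ l, w i l) * ‖z' i - z i‖ ^ 2 := by
    rw [mul_sum]
    gcongr with i _
    exact hrow i
  have hcombined : 4 * δ' 0 * ∑ i, ‖z' i - z i‖ ^ 2 + ∑ i, ∑ j, δ (‖z' i - z' j‖ ^ 2)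
      ≤ ∑ i, ∑ j, δ (‖z i - z j‖ ^ 2) := by
    norm_num at hdescent
    linarith
  have h0 := hpos 0 le_rfl
  calc ∑ i, ‖z' i - z i‖ ^ 2 + (4 * δ' 0)⁻¹ * ∑ i, ∑ j, δ (‖z' i - z' j‖ ^ 2)
      = (4 * δ' 0)⁻¹ * (4 * δ' 0 * ∑ i, ‖z' i - z i‖ ^ 2 + ∑ i, ∑ j, δ (‖z' i - z' j‖ ^ 2)) := by
        field_simp
    _ ≤ (4 * δ' 0)⁻¹ * ∑ i, ∑ j, δ (‖z i - z j‖ ^ 2) := by gcongr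

end Diffusion

lemma EuclideanSpace.norm_toLp_sub_toLp_sq {n : Type*} [Fintype n] (a b : n → ℝ) :
    ‖(WithLp.toLp 2 a : EuclideanSpace ℝ n) - WithLp.toLp 2 b‖ ^ 2 = ∑ c, (a c - b c) ^ 2 := by
  simp [EuclideanSpace.real_norm_sq_eq]

theorem stmt_10_general (N d : ℕ)
    (δ δ' : ℝ → ℝ)
    (hderiv : ∀ u : ℝ, 0 ≤ u → HasDerivAt δ (δ' u) u)
    (hconc : ConcaveOn ℝ (Set.Ici 0) δ)
    (hpos : ∀ u : ℝ, 0 ≤ u → 0 < δ' u) :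
    ∃ τ : ℝ, 0 < τ ∧ τ ≤ 1 ∧ ∃ lam : ℝ, 0 < lam ∧
      ∀ Z : ℕ → Matrix (Fin N) (Fin d) ℝ,
        (∀ k (i : Fin N) (c : Fin d),
          Z (k + 1) i c =
            (1 - τ * ∑ j, (δ' (∑ c', (Z k i c' - Z k j c') ^ 2)
                / ∑ l, δ' (∑ c', (Z k i c' - Z k l c') ^ 2))) * Z k i c
              + τ * ∑ j, (δ' (∑ c', (Z k i c' - Z k j c') ^ 2)
                / ∑ l, δ' (∑ c', (Z k i c' - Z k l c') ^ 2)) * Z k j c)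
        → ∀ k, 1 ≤ k →
            (∑ i, ∑ c, (Z (k + 1) i c - Z k i c) ^ 2)
                + lam * ∑ i, ∑ j, δ (∑ c, (Z (k + 1) i c - Z (k + 1) j c) ^ 2)
              ≤ (∑ i, ∑ c, (Z k i c - Z (k - 1) i c) ^ 2)
                + lam * ∑ i, ∑ j, δ (∑ c, (Z k i c - Z k j c) ^ 2) := by
  have h0 := hpos 0 le_rfl
  refine ⟨1 / 2, by norm_num, by norm_num, (4 * δ' 0)⁻¹, by positivity, fun Z hZ k _ => ?_⟩
  let e : ℕ → Fin N → EuclideanSpace ℝ (Fin d) := fun k i => WithLp.toLp 2 (Z k i)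
  have hstep : diffusionStep (diffusivity δ' (e k)) (1 / 2) (e k) = e (k + 1) := by
    funext i
    ext c
    simp only [diffusionStep, rowNormalize, diffusivity, e, EuclideanSpace.norm_toLp_sub_toLp_sq,
      PiLp.add_apply, PiLp.smul_apply, WithLp.ofLp_sum, WithLp.ofLp_smul, WithLp.ofLp_sub,
      Finset.sum_apply, Pi.smul_apply, Pi.sub_apply, smul_eq_mul, hZ, mul_sub, sum_sub_distrib,
      ← sum_mul]
    ring
  have hdescent := sum_norm_diffusionStep_sub_sq_add_le hderiv hconc hpos (e k)
  simp only [hstep, e, EuclideanSpace.norm_toLp_sub_toLp_sq] at hdescent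
  have hprev : 0 ≤ ∑ i, ∑ c, (Z k i c - Z (k - 1) i c) ^ 2 := by positivity
  linarith

/-- for a differentiable, non-decreasing, concave penalty `δ` on
`[0,∞)` with strictly positive derivative `δ'`, there exist a step size
`τ ∈ (0,1]` and a weight `lam > 0` such that the diffusion iteration with
row-normalized coupling `ŝ_ij^(k) = δ'(‖z_i^(k) − z_j^(k)‖²) / Σ_l δ'(...)`
descends the regularized energy
`E(Z,k;δ) = ‖Z − Z^(k)‖_F² + lam Σ_{i,j} δ(‖z_i − z_j‖²)` at every step. -/
theorem stmt_10 (N d : ℕ) (hN : 1 ≤ N) (hd : 1 ≤ d)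
    (δ δ' : ℝ → ℝ)
    (hderiv : ∀ u : ℝ, 0 ≤ u → HasDerivAt δ (δ' u) u)
    (hmono : MonotoneOn δ (Set.Ici 0))
    (hconc : ConcaveOn ℝ (Set.Ici 0) δ)
    (hpos : ∀ u : ℝ, 0 ≤ u → 0 < δ' u) :
    ∃ τ : ℝ, 0 < τ ∧ τ ≤ 1 ∧ ∃ lam : ℝ, 0 < lam ∧
      ∀ Z : ℕ → Matrix (Fin N) (Fin d) ℝ,
        (∀ k (i : Fin N) (c : Fin d),
          Z (k + 1) i c =
            (1 - τ * ∑ j, (δ' (∑ c', (Z k i c' - Z k j c') ^ 2)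
                / ∑ l, δ' (∑ c', (Z k i c' - Z k l c') ^ 2))) * Z k i c
              + τ * ∑ j, (δ' (∑ c', (Z k i c' - Z k j c') ^ 2)
                / ∑ l, δ' (∑ c', (Z k i c' - Z k l c') ^ 2)) * Z k j c)
        → ∀ k, 1 ≤ k →
            (∑ i, ∑ c, (Z (k + 1) i c - Z k i c) ^ 2)
                + lam * ∑ i, ∑ j, δ (∑ c, (Z (k + 1) i c - Z (k + 1) j c) ^ 2)
              ≤ (∑ i, ∑ c, (Z k i c - Z (k - 1) i c) ^ 2)
                + lam * ∑ i, ∑ j, δ (∑ c, (Z k i c - Z k j c) ^ 2) :=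
  stmt_10_general N d δ δ' hderiv hconc hpos
end

section
/- Let N,d ≥ 1 and let δ: ℝ → ℝ be differentiable on [0,∞). Fix Z₀ ∈ ℝ^{N×d} with rows z_{0,1},…,z_{0,N}, define ω_ij = δ′(‖z_{0,i} − z_{0,j}‖₂²), and define E(Z) = ‖Z − Z₀‖_F² + (1/2) Σ_{p,q} δ(‖z_p − z_q‖₂²). Then for each index i: −(1/2)·∇_{z_i} E(Z)|_{Z=Z₀} = Σ_j ω_ij (z_{0,j} − z_{0,i}). Hence the non-linear diffusion dynamics ∂z_i/∂t = Σ_j ω_ij(t)(z_j − z_i) with ω_ij(t) = δ′(‖z_i(t) − z_j(t)‖₂²) is the gradient flow of the regularized energy. -/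
/-!
Along the line `Z₀ + t • E` with `E = single i c 1` the fidelity term equals `t ^ 2`, so it
contributes nothing at `t = 0`. By the chain rule the pairwise term has derivative
`2 ∑ p q, ω p q ⟪z p - z q, v p - v q⟫` in a direction `V`; since `ω` is symmetric,
exchanging `p` and `q` turns this into `4 ∑ p, ⟪∑ q, ω p q (z p - z q), v p⟫`, which for
`V = E` is `4 ∑ q, ω i q (Z₀ i c - Z₀ q c)`.
-/

open Finset Matrix

section
variable {ι κ : Type*} [Fintype ι] [Fintype κ]

lemma hasDerivAt_sum_sq_add_mul (x v : κ → ℝ) (t : ℝ) :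
    HasDerivAt (fun s : ℝ => ∑ k, (x k + s * v k) ^ 2)
      (∑ k, 2 * (x k + t * v k) * v k) t := by
  refine HasDerivAt.fun_sum fun k _ => ?_
  have hline : HasDerivAt (fun s : ℝ => x k + s * v k) (v k) t := by
    simpa using ((hasDerivAt_id t).mul_const (v k)).const_add (x k)
  simpa using hline.fun_pow 2

lemma sum_sum_mul_sub_mul_sub_of_symm {w : ι → ι → ℝ} (hw : ∀ p q, w p q = w q p)
    (x v : ι → ℝ) :
    ∑ p, ∑ q, w p q * ((x p - x q) * (v p - v q))
      = 2 * ∑ p, (∑ q, w p q * (x p - x q)) * v p := by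
  have hswap : ∑ p, ∑ q, w p q * ((x p - x q) * v q)
      = -∑ p, ∑ q, w p q * ((x p - x q) * v p) := by
    rw [Finset.sum_comm, ← Finset.sum_neg_distrib]
    refine Finset.sum_congr rfl fun p _ => ?_
    rw [← Finset.sum_neg_distrib]
    refine Finset.sum_congr rfl fun q _ => ?_
    rw [hw]; ring
  calc ∑ p, ∑ q, w p q * ((x p - x q) * (v p - v q))
      = ∑ p, ∑ q, w p q * ((x p - x q) * v p) - ∑ p, ∑ q, w p q * ((x p - x q) * v q) := by
        simp only [mul_sub, Finset.sum_sub_distrib]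
    _ = 2 * ∑ p, (∑ q, w p q * (x p - x q)) * v p := by
        simp only [hswap, Finset.sum_mul, mul_assoc]; ring

lemma hasDerivAt_sum_sq_sub_add_smul (Z V : Matrix ι κ ℝ) :
    HasDerivAt (fun t : ℝ => ∑ p, ∑ k, ((Z + t • V) p k - Z p k) ^ 2) 0 0 := by
  have h := HasDerivAt.fun_sum (u := Finset.univ) fun p _ =>
    hasDerivAt_sum_sq_add_mul (0 : κ → ℝ) (V p) 0
  simpa using h

lemma hasDerivAt_sum_sum_comp_sqDist_add_smul {δ δ' : ℝ → ℝ}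
    (hderiv : ∀ u : ℝ, 0 ≤ u → HasDerivAt δ (δ' u) u) (Z V : Matrix ι κ ℝ) :
    HasDerivAt
      (fun t : ℝ => ∑ p, ∑ q, δ (∑ k, ((Z + t • V) p k - (Z + t • V) q k) ^ 2))
      (4 * ∑ p, ∑ k, (∑ q, δ' (∑ k', (Z p k' - Z q k') ^ 2) * (Z p k - Z q k)) * V p k)
      0 := by
  set w : ι → ι → ℝ := fun p q => δ' (∑ k, (Z p k - Z q k) ^ 2)
  have hw : ∀ p q, w p q = w q p := fun p q =>
    congrArg δ' (Finset.sum_congr rfl fun k _ => by ring)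
  have hpair : ∀ p q,
      HasDerivAt (fun t : ℝ => δ (∑ k, ((Z + t • V) p k - (Z + t • V) q k) ^ 2))
      (w p q * ∑ k, 2 * (Z p k - Z q k) * (V p k - V q k)) 0 := fun p q => by
    have hline : (fun t : ℝ => ∑ k, ((Z + t • V) p k - (Z + t • V) q k) ^ 2)
        = fun t => ∑ k, ((Z p k - Z q k) + t * (V p k - V q k)) ^ 2 := by
      funext t; refine Finset.sum_congr rfl fun k _ => ?_
      simp only [Matrix.add_apply, Matrix.smul_apply, smul_eq_mul]; ring
    have hinner := hasDerivAt_sum_sq_add_mul (fun k => Z p k - Z q k) (fun k => V p k - V q k) 0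
    simp only [zero_mul, add_zero] at hinner
    rw [← hline] at hinner
    exact (hderiv _ (by positivity)).comp_of_eq (x := 0) hinner (by simp)
  refine (HasDerivAt.fun_sum fun p _ => HasDerivAt.fun_sum fun q _ => hpair p q).congr_deriv ?_
  calc ∑ p, ∑ q, w p q * ∑ k, 2 * (Z p k - Z q k) * (V p k - V q k)
      = 2 * ∑ k, ∑ p, ∑ q, w p q * ((Z p k - Z q k) * (V p k - V q k)) := by
        simp only [Finset.mul_sum]
        conv_rhs => rw [Finset.sum_comm]; enter [2, p]; rw [Finset.sum_comm]
        refine Finset.sum_congr rfl fun p _ => Finset.sum_congr rfl fun q _ =>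
          Finset.sum_congr rfl fun k _ => by ring
    _ = 4 * ∑ p, ∑ k, (∑ q, w p q * (Z p k - Z q k)) * V p k := by
        simp only [sum_sum_mul_sub_mul_sub_of_symm hw, Finset.mul_sum]
        rw [Finset.sum_comm]
        exact Finset.sum_congr rfl fun p _ => Finset.sum_congr rfl fun k _ => by ring

lemma sum_sum_mul_single_one_apply {α : Type*} [NonAssocSemiring α]
    [DecidableEq ι] [DecidableEq κ]
    (A : ι → κ → α) (i : ι) (c : κ) : ∑ p, ∑ k, A p k * single i c 1 p k = A i c := by
  simp [single_apply, ite_and]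

end

theorem stmt_11_general (N d : ℕ)
    (δ δ' : ℝ → ℝ)
    (hderiv : ∀ u : ℝ, 0 ≤ u → HasDerivAt δ (δ' u) u)
    (Z₀ : Matrix (Fin N) (Fin d) ℝ) :
    ∀ (i : Fin N) (c : Fin d),
      HasDerivAt (fun t : ℝ =>
        (∑ p, ∑ c', ((Z₀ + t • Matrix.single i c 1 :
            Matrix (Fin N) (Fin d) ℝ) p c' - Z₀ p c') ^ 2)
          + (1 / 2 : ℝ) * ∑ p, ∑ q,
              δ (∑ c', ((Z₀ + t • Matrix.single i c 1 :
                  Matrix (Fin N) (Fin d) ℝ) p c'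
                - (Z₀ + t • Matrix.single i c 1 :
                  Matrix (Fin N) (Fin d) ℝ) q c') ^ 2))
        (-2 * ∑ j, δ' (∑ c', (Z₀ i c' - Z₀ j c') ^ 2) * (Z₀ j c - Z₀ i c)) 0 := by
  intro i c
  have h := (hasDerivAt_sum_sq_sub_add_smul Z₀ (single i c 1)).add
    ((hasDerivAt_sum_sum_comp_sqDist_add_smul hderiv Z₀ (single i c 1)).const_mul (1 / 2 : ℝ))
  refine h.congr_deriv ?_
  rw [sum_sum_mul_single_one_apply, zero_add, Finset.mul_sum, Finset.mul_sum, Finset.mul_sum]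
  exact Finset.sum_congr rfl fun j _ => by ring

/-- for a penalty `δ` differentiable on `[0,∞)` with derivative
`δ'`, the negative half-gradient of
`E(Z) = ‖Z − Z₀‖_F² + (1/2) Σ_{p,q} δ(‖z_p − z_q‖²)` with respect to the
`i`-th row at `Z = Z₀` equals `Σ_j ω_ij (z_{0,j} − z_{0,i})` with
`ω_ij = δ'(‖z_{0,i} − z_{0,j}‖²)` (stated entrywise: the partial derivative
in the `(i,c)` entry is `−2 Σ_j ω_ij (Z₀ j c − Z₀ i c)`). -/
theorem stmt_11 (N d : ℕ) (hN : 1 ≤ N) (hd : 1 ≤ d)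
    (δ δ' : ℝ → ℝ)
    (hderiv : ∀ u : ℝ, 0 ≤ u → HasDerivAt δ (δ' u) u)
    (Z₀ : Matrix (Fin N) (Fin d) ℝ) :
    ∀ (i : Fin N) (c : Fin d),
      HasDerivAt (fun t : ℝ =>
        (∑ p, ∑ c', ((Z₀ + t • Matrix.single i c 1 :
            Matrix (Fin N) (Fin d) ℝ) p c' - Z₀ p c') ^ 2)
          + (1 / 2 : ℝ) * ∑ p, ∑ q,
              δ (∑ c', ((Z₀ + t • Matrix.single i c 1 :
                  Matrix (Fin N) (Fin d) ℝ) p c'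
                - (Z₀ + t • Matrix.single i c 1 :
                  Matrix (Fin N) (Fin d) ℝ) q c') ^ 2))
        (-2 * ∑ j, δ' (∑ c', (Z₀ i c' - Z₀ j c') ^ 2) * (Z₀ j c - Z₀ i c)) 0 :=
  stmt_11_general N d δ δ' hderiv Z₀
end

section
/- Define δ_a(u) = u − 2·log(exp(u/2 − 1) + 1) for u ∈ ℝ. Then: (i) δ_a′(u) = 1/(1 + exp(u/2 − 1)), which is strictly positive for all u ∈ ℝ; (ii) δ_a is strictly increasing and concave on ℝ (δ_a′ is strictly decreasing); (iii) for any unit vectors z_i, z_j ∈ ℝ^d (‖z_i‖₂ = ‖z_j‖₂ = 1), one has 1/(1 + exp(−⟨z_i, z_j⟩)) = δ_a′(‖z_i − z_j‖₂²). Hence the sigmoid attention f = 1/(1 + exp(−⟨z_i, z_j⟩)) is the derivative of the non-decreasing concave penalty δ_a evaluated at the squared distance. -/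
/-! The derivative `1 - exp (u/2 - 1) / (exp (u/2 - 1) + 1) = 1 / (1 + exp (u/2 - 1))` is positive
and strictly decreasing, which gives monotonicity and concavity. For unit vectors
`‖zᵢ - zⱼ‖² = 2 - 2⟨zᵢ, zⱼ⟩`, so `‖zᵢ - zⱼ‖² / 2 - 1 = -⟨zᵢ, zⱼ⟩`. -/

open Finset Real

section Penalty

variable (c : ℝ)

theorem hasDerivAt_sub_two_mul_log_exp_half_sub_add_one (u : ℝ) :
    HasDerivAt (fun v : ℝ => v - 2 * log (exp (v / 2 - c) + 1))
      (1 / (1 + exp (u / 2 - c))) u := by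
  have hinner : HasDerivAt (fun v : ℝ => v / 2 - c) (1 / 2) u := by
    simpa using ((hasDerivAt_id u).div_const 2).sub_const c
  have hlog := (hinner.exp.add_const 1).log (by positivity)
  refine ((hasDerivAt_id' u).sub (hlog.const_mul 2)).congr_deriv ?_
  field_simp
  ring

theorem deriv_sub_two_mul_log_exp_half_sub_add_one :
    deriv (fun v : ℝ => v - 2 * log (exp (v / 2 - c) + 1))
      = fun u => 1 / (1 + exp (u / 2 - c)) :=
  funext fun u => (hasDerivAt_sub_two_mul_log_exp_half_sub_add_one c u).deriv

theorem strictAnti_one_div_one_add_exp_half_sub :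
    StrictAnti fun u : ℝ => 1 / (1 + exp (u / 2 - c)) := by
  intro a b hab
  have hexp : exp (a / 2 - c) < exp (b / 2 - c) := exp_lt_exp.2 (by linarith)
  exact one_div_lt_one_div_of_lt (by positivity) (by linarith)

theorem strictMono_sub_two_mul_log_exp_half_sub_add_one :
    StrictMono fun v : ℝ => v - 2 * log (exp (v / 2 - c) + 1) :=
  strictMono_of_deriv_pos fun u => by
    rw [deriv_sub_two_mul_log_exp_half_sub_add_one]
    positivity

theorem concaveOn_univ_sub_two_mul_log_exp_half_sub_add_one :
    ConcaveOn ℝ Set.univ fun v : ℝ => v - 2 * log (exp (v / 2 - c) + 1) :=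
  Antitone.concaveOn_univ_of_deriv
    (fun u => (hasDerivAt_sub_two_mul_log_exp_half_sub_add_one c u).differentiableAt)
    (by
      rw [deriv_sub_two_mul_log_exp_half_sub_add_one]
      exact (strictAnti_one_div_one_add_exp_half_sub c).antitone)

end Penalty

theorem sum_sub_sq_eq {ι : Type*} (s : Finset ι) (x y : ι → ℝ) :
    ∑ i ∈ s, (x i - y i) ^ 2
      = ∑ i ∈ s, x i ^ 2 + ∑ i ∈ s, y i ^ 2 - 2 * ∑ i ∈ s, x i * y i := by
  rw [mul_sum, ← sum_add_distrib, ← sum_sub_distrib]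
  exact sum_congr rfl fun i _ => by ring

/-- properties of the advanced-diffusivity penalty
`δ_a(u) = u − 2 log(exp(u/2 − 1) + 1)`: its derivative is
`1/(1 + exp(u/2 − 1))`, strictly positive; `δ_a` is strictly increasing and
concave on `ℝ`, with strictly decreasing derivative; and for unit vectors
`z_i, z_j`, the sigmoid attention `1/(1 + exp(−⟨z_i, z_j⟩))` equals
`δ_a′(‖z_i − z_j‖²)`. -/
theorem stmt_16 (d : ℕ) (zi zj : Fin d → ℝ)
    (hzi : ∑ c, (zi c) ^ 2 = 1) (hzj : ∑ c, (zj c) ^ 2 = 1) :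
    (∀ u : ℝ, HasDerivAt
        (fun v : ℝ => v - 2 * Real.log (Real.exp (v / 2 - 1) + 1))
        (1 / (1 + Real.exp (u / 2 - 1))) u)
    ∧ (∀ u : ℝ, 0 < 1 / (1 + Real.exp (u / 2 - 1)))
    ∧ StrictMono (fun v : ℝ => v - 2 * Real.log (Real.exp (v / 2 - 1) + 1))
    ∧ ConcaveOn ℝ Set.univ
        (fun v : ℝ => v - 2 * Real.log (Real.exp (v / 2 - 1) + 1))
    ∧ StrictAnti (fun u : ℝ => 1 / (1 + Real.exp (u / 2 - 1)))
    ∧ 1 / (1 + Real.exp (-(∑ c, zi c * zj c)))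
        = 1 / (1 + Real.exp ((∑ c, (zi c - zj c) ^ 2) / 2 - 1)) := by
  refine ⟨hasDerivAt_sub_two_mul_log_exp_half_sub_add_one 1, fun u => by positivity,
    strictMono_sub_two_mul_log_exp_half_sub_add_one 1,
    concaveOn_univ_sub_two_mul_log_exp_half_sub_add_one 1,
    strictAnti_one_div_one_add_exp_half_sub 1, ?_⟩
  rw [sum_sub_sq_eq, hzi, hzj]
  ring_nf
end

section
/- Let d > 0 be a real number and define δ_T(u) = −2√d · exp((2 − u)/(2√d)) for u ∈ ℝ. Then: (i) δ_T′(u) = exp((2 − u)/(2√d)), which is strictly positive and strictly decreasing in u; (ii) δ_T is strictly increasing and concave on ℝ; (iii) for any unit vectors z_i, z_j ∈ ℝ^m (‖z_i‖₂ = ‖z_j‖₂ = 1), one has exp(⟨z_i, z_j⟩/√d) = δ_T′(‖z_i − z_j‖₂²). Hence the dot-then-exponential Softmax attention kernel exp(⟨z_i, z_j⟩/√d) of Transformers is the derivative of a non-decreasing concave penalty evaluated at the squared distance, so a sequence of Softmax attention layers corresponds to descent on an associated regularized energy. -/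
open Finset

/-!
With `k = 2√d`, the penalty is `δ_T(u) = -k · exp ((2 - u) / k)`, whose derivative
`exp ((2 - u) / k)` is positive and strictly decreasing; hence `δ_T` is strictly increasing
and (strictly) concave. For unit vectors, `‖zᵢ - zⱼ‖² = 2 - 2⟨zᵢ, zⱼ⟩`, so
`⟨zᵢ, zⱼ⟩ / √d = (2 - ‖zᵢ - zⱼ‖²) / (2√d)`.
-/

section ExpPenalty

noncomputable def expPenalty (k c v : ℝ) : ℝ := -k * Real.exp ((c - v) / k)

variable {k : ℝ} (c : ℝ)

theorem hasDerivAt_expPenalty (hk : k ≠ 0) (u : ℝ) :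
    HasDerivAt (expPenalty k c) (Real.exp ((c - u) / k)) u := by
  have hinner : HasDerivAt (fun v : ℝ => (c - v) / k) (-1 / k) u := by
    simpa using ((hasDerivAt_id u).const_sub c).div_const k
  refine (hinner.exp.const_mul (-k)).congr_deriv ?_
  field_simp

theorem deriv_expPenalty (hk : k ≠ 0) :
    deriv (expPenalty k c) = fun u => Real.exp ((c - u) / k) :=
  funext fun u => (hasDerivAt_expPenalty c hk u).deriv

theorem strictAnti_exp_sub_div (hk : 0 < k) :
    StrictAnti fun u : ℝ => Real.exp ((c - u) / k) := fun _ _ hab =>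
  Real.exp_lt_exp.mpr (div_lt_div_of_pos_right (by linarith) hk)

theorem strictMono_expPenalty (hk : 0 < k) : StrictMono (expPenalty k c) :=
  strictMono_of_deriv_pos fun u => by
    rw [deriv_expPenalty c hk.ne']
    exact Real.exp_pos _

theorem strictConcaveOn_expPenalty (hk : 0 < k) :
    StrictConcaveOn ℝ Set.univ (expPenalty k c) := by
  refine StrictAnti.strictConcaveOn_univ_of_deriv ?_ ?_
  · exact continuous_iff_continuousAt.mpr fun u =>
      (hasDerivAt_expPenalty c hk.ne' u).continuousAt
  · rw [deriv_expPenalty c hk.ne']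
    exact strictAnti_exp_sub_div c hk

end ExpPenalty

theorem sum_mul_eq_of_sum_sq_eq_one {ι : Type*} (s : Finset ι) {x y : ι → ℝ}
    (hx : ∑ i ∈ s, x i ^ 2 = 1) (hy : ∑ i ∈ s, y i ^ 2 = 1) :
    ∑ i ∈ s, x i * y i = (2 - ∑ i ∈ s, (x i - y i) ^ 2) / 2 := by
  have hexpand : ∑ i ∈ s, (x i - y i) ^ 2
      = ∑ i ∈ s, x i ^ 2 + ∑ i ∈ s, y i ^ 2 - 2 * ∑ i ∈ s, x i * y i := by
    rw [← sum_add_distrib, mul_sum, ← sum_sub_distrib]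
    exact sum_congr rfl fun i _ => by ring
  rw [hexpand, hx, hy]
  ring

/-- properties of the Transformer Softmax-attention penalty
`δ_T(u) = −2√d · exp((2 − u)/(2√d))` for a real `d > 0`: its derivative is
`exp((2 − u)/(2√d))`, strictly positive and strictly decreasing; `δ_T` is
strictly increasing and concave on `ℝ`; and for unit vectors `z_i, z_j`, the
dot-then-exponential kernel `exp(⟨z_i, z_j⟩/√d)` equals
`δ_T′(‖z_i − z_j‖²)`. -/
theorem stmt_17 (dr : ℝ) (hdr : 0 < dr) (m : ℕ) (zi zj : Fin m → ℝ)
    (hzi : ∑ c, (zi c) ^ 2 = 1) (hzj : ∑ c, (zj c) ^ 2 = 1) :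
    (∀ u : ℝ, HasDerivAt
        (fun v : ℝ => -2 * Real.sqrt dr * Real.exp ((2 - v) / (2 * Real.sqrt dr)))
        (Real.exp ((2 - u) / (2 * Real.sqrt dr))) u)
    ∧ (∀ u : ℝ, 0 < Real.exp ((2 - u) / (2 * Real.sqrt dr)))
    ∧ StrictAnti (fun u : ℝ => Real.exp ((2 - u) / (2 * Real.sqrt dr)))
    ∧ StrictMono (fun v : ℝ =>
        -2 * Real.sqrt dr * Real.exp ((2 - v) / (2 * Real.sqrt dr)))
    ∧ ConcaveOn ℝ Set.univ (fun v : ℝ =>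
        -2 * Real.sqrt dr * Real.exp ((2 - v) / (2 * Real.sqrt dr)))
    ∧ Real.exp ((∑ c, zi c * zj c) / Real.sqrt dr)
        = Real.exp ((2 - ∑ c, (zi c - zj c) ^ 2) / (2 * Real.sqrt dr)) := by
  have hk : 0 < 2 * Real.sqrt dr := by positivity
  have hδ : (fun v : ℝ => -2 * Real.sqrt dr * Real.exp ((2 - v) / (2 * Real.sqrt dr)))
      = expPenalty (2 * Real.sqrt dr) 2 := by
    funext v
    simp only [expPenalty]
    ring
  rw [hδ, sum_mul_eq_of_sum_sq_eq_one univ hzi hzj, div_div]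
  exact ⟨hasDerivAt_expPenalty 2 hk.ne', fun _ => Real.exp_pos _,
    strictAnti_exp_sub_div 2 hk, strictMono_expPenalty 2 hk,
    (strictConcaveOn_expPenalty 2 hk).concaveOn, rfl⟩
end

section
/- Let N,d ≥ 1, let Δ ∈ ℝ^{N×N} be symmetric positive semidefinite with largest eigenvalue λ₁ and smallest eigenvalue λ₂, let 0 < τ ≤ 1/λ₁ (assuming λ₁ > 0), and set B = I − τΔ. Then for every Z ∈ ℝ^{N×d}: (1 − τλ₁)² · tr(Zᵀ Δ Z) ≤ tr((BZ)ᵀ Δ (BZ)) ≤ (1 − τλ₂)² · tr(Zᵀ Δ Z). -/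
open Finset Matrix

lemma tr_diag {N d : ℕ} (g : Fin N → ℝ) (W : Matrix (Fin N) (Fin d) ℝ) :
    (Wᵀ * (diagonal g) * W).trace = ∑ i, g i * ∑ j, (W i j)^2 := by
  simp only [Matrix.trace, Matrix.diag, Matrix.mul_apply, Matrix.transpose_apply,
    Matrix.diagonal_apply, mul_ite, ite_mul, mul_zero, zero_mul,
    Finset.sum_ite_eq, Finset.sum_ite_eq', Finset.mem_univ, if_true, Finset.mul_sum,
    Finset.sum_mul]
  rw [Finset.sum_comm]
  apply Finset.sum_congr rfl; intro i _
  apply Finset.sum_congr rfl; intro j _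
  ring


/-- for symmetric PSD `Δ` with largest eigenvalue `lam1`,
smallest eigenvalue `lam2`, `0 < τ ≤ 1/lam1`, and `B = I − τΔ`, the Dirichlet
energy satisfies
`(1 − τ lam1)² tr(Zᵀ Δ Z) ≤ tr((BZ)ᵀ Δ (BZ)) ≤ (1 − τ lam2)² tr(Zᵀ Δ Z)`
for every `Z`. -/
theorem stmt_18 (N d : ℕ) (hN : 1 ≤ N) (hd : 1 ≤ d)
    (Δ : Matrix (Fin N) (Fin N) ℝ)
    (hH : Δ.IsHermitian) (hΔ : Δ.PosSemidef)
    (lam1 lam2 : ℝ)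
    (hlam1 : IsGreatest (Set.range hH.eigenvalues) lam1)
    (hlam2 : IsLeast (Set.range hH.eigenvalues) lam2)
    (hlam1pos : 0 < lam1)
    (τ : ℝ) (hτ : 0 < τ) (hτ1 : τ ≤ 1 / lam1) :
    ∀ Z : Matrix (Fin N) (Fin d) ℝ,
      (1 - τ * lam1) ^ 2 * (Zᵀ * Δ * Z).trace
          ≤ (((((1 : Matrix (Fin N) (Fin N) ℝ) - τ • Δ) * Z)ᵀ) * Δ
              * (((1 : Matrix (Fin N) (Fin N) ℝ) - τ • Δ) * Z)).trace
      ∧ (((((1 : Matrix (Fin N) (Fin N) ℝ) - τ • Δ) * Z)ᵀ) * Δ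
              * (((1 : Matrix (Fin N) (Fin N) ℝ) - τ • Δ) * Z)).trace
          ≤ (1 - τ * lam2) ^ 2 * (Zᵀ * Δ * Z).trace := by
  intro Z
  set U : Matrix (Fin N) (Fin N) ℝ := (hH.eigenvectorUnitary : Matrix (Fin N) (Fin N) ℝ) with hUdef
  set e : Fin N → ℝ := hH.eigenvalues with hedef
  have hU1 : star U * U = 1 := Matrix.mem_unitaryGroup_iff'.mp hH.eigenvectorUnitary.2
  have hU2 : U * star U = 1 := Matrix.mem_unitaryGroup_iff.mp hH.eigenvectorUnitary.2
  have hspec : Δ = U * diagonal e * star U := by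
    have := hH.spectral_theorem
    simpa using this
  have hUT : Uᵀ = star U := by
    ext i j; simp [Matrix.star_eq_conjTranspose, Matrix.conjTranspose_apply]
  have hsUT : (star U)ᵀ = U := by
    ext i j; simp [Matrix.star_eq_conjTranspose, Matrix.conjTranspose_apply]
  have hB : (1 : Matrix (Fin N) (Fin N) ℝ) - τ • Δ
      = U * diagonal (fun i => 1 - τ * e i) * star U := by
    have hd1 : diagonal (fun i => 1 - τ * e i)
        = (1 : Matrix (Fin N) (Fin N) ℝ) - τ • diagonal e := by
      ext i j
      by_cases h : i = j <;> simp [h, Matrix.diagonal_apply, Matrix.one_apply]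
    rw [hd1, Matrix.mul_sub, Matrix.sub_mul, Matrix.mul_one, hU2, hspec]
    simp [Matrix.mul_smul, Matrix.smul_mul]
  set W : Matrix (Fin N) (Fin d) ℝ := star U * Z with hWdef
  have hc : ∀ {m : ℕ} (X : Matrix (Fin N) (Fin m) ℝ), star U * (U * X) = X := by
    intro m X; rw [← Matrix.mul_assoc, hU1, Matrix.one_mul]
  have hZ : Zᵀ * Δ * Z = Wᵀ * diagonal e * W := by
    rw [hspec, hWdef, Matrix.transpose_mul, hsUT]
    simp only [Matrix.mul_assoc]
  have hg : (diagonal (fun i => 1 - τ * e i) : Matrix (Fin N) (Fin N) ℝ)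
      * (diagonal e * (diagonal (fun i => 1 - τ * e i) * W))
      = diagonal (fun i => e i * (1 - τ * e i)^2) * W := by
    rw [← Matrix.mul_assoc, ← Matrix.mul_assoc, Matrix.diagonal_mul_diagonal,
      Matrix.diagonal_mul_diagonal]
    congr 1
    ext i j
    by_cases h : i = j <;> simp [h, Matrix.diagonal_apply]
    ring
  have hBZ : ((((1 : Matrix (Fin N) (Fin N) ℝ) - τ • Δ) * Z)ᵀ) * Δ
        * (((1 : Matrix (Fin N) (Fin N) ℝ) - τ • Δ) * Z)
      = Wᵀ * diagonal (fun i => e i * (1 - τ * e i)^2) * W := by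
    rw [hB, hspec]
    simp only [Matrix.transpose_mul, hUT, hsUT, Matrix.diagonal_transpose, Matrix.mul_assoc, hc]
    rw [hg, hWdef]
    simp only [Matrix.transpose_mul, hsUT, Matrix.mul_assoc]
  rw [hZ, hBZ, tr_diag, tr_diag, Finset.mul_sum, Finset.mul_sum]
  have hs : ∀ i, (0:ℝ) ≤ ∑ j, (W i j)^2 := fun i => Finset.sum_nonneg fun j _ => sq_nonneg _
  have he0 : ∀ i, 0 ≤ e i := fun i => hΔ.eigenvalues_nonneg i
  have he1 : ∀ i, e i ≤ lam1 := fun i => hlam1.2 ⟨i, rfl⟩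
  have he2 : ∀ i, lam2 ≤ e i := fun i => hlam2.2 ⟨i, rfl⟩
  have hτl : τ * lam1 ≤ 1 := by
    rw [le_div_iff₀ hlam1pos] at hτ1; linarith
  constructor
  · apply Finset.sum_le_sum
    intro i _
    have h1 : (1 - τ * lam1)^2 ≤ (1 - τ * e i)^2 := by
      nlinarith [he0 i, he1 i, mul_nonneg hτ.le (he0 i), mul_le_mul_of_nonneg_left (he1 i) hτ.le]
    nlinarith [hs i, he0 i, mul_le_mul_of_nonneg_left h1 (he0 i)]
  · apply Finset.sum_le_sum
    intro i _
    have h1 : (1 - τ * e i)^2 ≤ (1 - τ * lam2)^2 := by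
      nlinarith [he2 i, he1 i, mul_le_mul_of_nonneg_left (he1 i) hτ.le,
        mul_le_mul_of_nonneg_left (he2 i) hτ.le]
    nlinarith [hs i, he0 i, mul_le_mul_of_nonneg_left h1 (he0 i)]
end
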